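/- arXiv:1807.07423 — 3 statements merged into one kernel-verified Lean document; each statement's English description precedes it below -/
import Mathlib

section
/- Let H be a complex Hilbert space and A : H →L[ℂ] H a self-adjoint bounded operator. Then A is not hypercyclic: no vector f ∈ H has dense orbit {Aⁿ f : n ∈ ℕ}, provided H ≠ {0}. -/
/-!
For a self-adjoint `A`, `‖A g‖² = ⟪A² g, g⟫ ≤ ‖A² g‖ ‖g‖`; applied to `g = Aⁿ f` this says that the
norms `aₙ = ‖Aⁿ f‖` are log-convex, so the ratios `aₙ₊₁ / aₙ` increase. If some ratio reaches `1`,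
the norms are eventually nondecreasing and the orbit stays away from `0`; otherwise the norms
decrease and the orbit is bounded (as it is when some `aₙ` vanishes, since
then the orbit is eventually `0`). A dense subset of a nontrivial normed space is neither.
-/

open Bornology Set

section LogConvex

variable {a : ℕ → ℝ}

lemma succ_le_succ_succ_of_le_succ_of_sq_le_mul (hnonneg : ∀ n, 0 ≤ a n)
    (hconv : ∀ n, a (n + 1) ^ 2 ≤ a (n + 2) * a n) {n : ℕ} (hn : a n ≤ a (n + 1)) :
    a (n + 1) ≤ a (n + 2) := by
  rcases (hnonneg (n + 1)).eq_or_lt with hzero | hpos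
  · rw [← hzero]; exact hnonneg _
  · nlinarith [hconv n, hnonneg (n + 2)]

lemma eq_zero_of_le_of_eq_zero_of_sq_le_mul (hnonneg : ∀ n, 0 ≤ a n)
    (hconv : ∀ n, a (n + 1) ^ 2 ≤ a (n + 2) * a n) {n m : ℕ} (hn : a n = 0) (hnm : n ≤ m) :
    a m = 0 := by
  induction m, hnm using Nat.le_induction with
  | base => exact hn
  | succ m _ ih => nlinarith [hconv m, hnonneg (m + 1), hnonneg (m + 2)]

lemma exists_pos_forall_le_of_sq_le_mul (hpos : ∀ n, 0 < a n)
    (hconv : ∀ n, a (n + 1) ^ 2 ≤ a (n + 2) * a n) {N : ℕ} (hN : a N ≤ a (N + 1)) :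
    ∃ ε > 0, ∀ n, ε ≤ a n := by
  have hmono : MonotoneOn a (Ici N) := by
    refine monotoneOn_nat_Ici_of_le_succ fun m hm => ?_
    induction m, hm using Nat.le_induction with
    | base => exact hN
    | succ m _ ih =>
      exact succ_le_succ_succ_of_le_succ_of_sq_le_mul (fun n => (hpos n).le) hconv ih
  refine ⟨(Finset.range (N + 1)).inf' Finset.nonempty_range_add_one a,
    (Finset.lt_inf'_iff _).2 fun n _ => hpos n, fun n => ?_⟩
  rcases le_or_gt n N with hn | hn
  · exact Finset.inf'_le a (Finset.mem_range_succ_iff.2 hn)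
  · exact (Finset.inf'_le a (Finset.self_mem_range_succ N)).trans
      (hmono (mem_Ici.2 le_rfl) (mem_Ici.2 hn.le) hn.le)

lemma bddAbove_range_or_exists_pos_forall_le_of_sq_le_mul (hnonneg : ∀ n, 0 ≤ a n)
    (hconv : ∀ n, a (n + 1) ^ 2 ≤ a (n + 2) * a n) :
    BddAbove (range a) ∨ ∃ ε > 0, ∀ n, ε ≤ a n := by
  by_cases hpos : ∀ n, 0 < a n
  · by_cases hincr : ∃ N, a N ≤ a (N + 1)
    · obtain ⟨N, hN⟩ := hincr
      exact Or.inr (exists_pos_forall_le_of_sq_le_mul hpos hconv hN)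
    · push Not at hincr
      have hanti : Antitone a := antitone_nat_of_succ_le fun n => (hincr n).le
      exact Or.inl ⟨a 0, by rintro _ ⟨n, rfl⟩; exact hanti n.zero_le⟩
  · push Not at hpos
    obtain ⟨n, hn⟩ := hpos
    have hzero : a n = 0 := le_antisymm hn (hnonneg n)
    refine Or.inl (Filter.Tendsto.bddAbove_range (a := 0) ?_)
    refine tendsto_const_nhds.congr' ?_
    filter_upwards [Filter.eventually_ge_atTop n] with m hm
    exact (eq_zero_of_le_of_eq_zero_of_sq_le_mul hnonneg hconv hzero hm).symm

end LogConvex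

lemma LinearMap.IsSymmetric.norm_apply_sq_le {𝕜 E : Type*} [RCLike 𝕜] [NormedAddCommGroup E]
    [InnerProductSpace 𝕜 E] {T : E →ₗ[𝕜] E} (hT : T.IsSymmetric) (x : E) :
    ‖T x‖ ^ 2 ≤ ‖T (T x)‖ * ‖x‖ := by
  calc ‖T x‖ ^ 2 = RCLike.re (inner 𝕜 (T x) (T x)) := (inner_self_eq_norm_sq _).symm
    _ = RCLike.re (inner 𝕜 (T (T x)) x) := by rw [hT (T x) x]
    _ ≤ ‖T (T x)‖ * ‖x‖ := re_inner_le_norm _ _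

lemma Dense.not_isBounded (𝕜 : Type*) {E : Type*} [NontriviallyNormedField 𝕜]
    [NormedAddCommGroup E] [NormedSpace 𝕜 E] [Nontrivial E] {s : Set E} (hs : Dense s) :
    ¬ IsBounded s := fun hbdd =>
  NormedSpace.unbounded_univ 𝕜 E (hs.closure_eq ▸ hbdd.closure)

theorem stmt_5 {H : Type*} [NormedAddCommGroup H] [InnerProductSpace ℂ H]
    [CompleteSpace H] [Nontrivial H]
    (A : H →L[ℂ] H) (hA : IsSelfAdjoint A) :
    ¬ ∃ f : H, Dense (Set.range fun n : ℕ => (A ^ n) f) := by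
  rintro ⟨f, hf⟩
  have hpow : ∀ n, (A ^ (n + 1)) f = A ((A ^ n) f) := fun n => by rw [pow_succ']; rfl
  have hconv : ∀ n, ‖(A ^ (n + 1)) f‖ ^ 2 ≤ ‖(A ^ (n + 2)) f‖ * ‖(A ^ n) f‖ := fun n => by
    rw [hpow (n + 1), hpow n]
    exact hA.isSymmetric.norm_apply_sq_le ((A ^ n) f)
  rcases bddAbove_range_or_exists_pos_forall_le_of_sq_le_mul (a := fun n => ‖(A ^ n) f‖)
      (fun n => norm_nonneg _) hconv with
    ⟨C, hC⟩ | ⟨ε, hε, hle⟩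
  · refine hf.not_isBounded ℂ (isBounded_iff_forall_norm_le.2 ⟨C, ?_⟩)
    rintro _ ⟨n, rfl⟩
    exact hC ⟨n, rfl⟩
  · obtain ⟨_, ⟨n, rfl⟩, hn⟩ := hf.exists_dist_lt 0 hε
    rw [dist_zero_left] at hn
    exact (hle n).not_gt hn
end

section
/- Let H be a nontrivial complex Hilbert space, and suppose H = K ⊕ K^⊥ where K, K^⊥ are closed subspaces invariant under a bounded operator A, such that ‖A x‖ ≥ ‖x‖ for all x ∈ K and ‖A x‖ ≤ ‖x‖ for all x ∈ K^⊥. Then A is not hypercyclic. -/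
theorem stmt_7 {H : Type*} [NormedAddCommGroup H] [InnerProductSpace ℂ H]
    [CompleteSpace H] [Nontrivial H]
    (A : H →L[ℂ] H) (K : Submodule ℂ H) (hK : IsClosed (K : Set H))
    (hinv : ∀ x ∈ K, A x ∈ K) (hinv' : ∀ x ∈ Kᗮ, A x ∈ Kᗮ)
    (hexp : ∀ x ∈ K, ‖x‖ ≤ ‖A x‖) (hcon : ∀ x ∈ Kᗮ, ‖A x‖ ≤ ‖x‖) :
    ¬ ∃ f : H, Dense (Set.range fun n : ℕ => (A ^ n) f) := by
  rintro ⟨f, hf⟩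
  haveI : CompleteSpace K := hK.completeSpace_coe
  set f₁ : H := (K.orthogonalProjectionOnto f : H) with hf₁def
  have hf₁K : f₁ ∈ K := (K.orthogonalProjectionOnto f).2
  set f₂ : H := f - f₁ with hf₂def
  have hf₂K : f₂ ∈ Kᗮ := K.sub_starProjection_mem_orthogonal f
  -- iterates stay in subspaces
  have hK1 : ∀ n : ℕ, (A ^ n) f₁ ∈ K := by
    intro n
    induction n with
    | zero => simpa using hf₁K
    | succ n ih => rw [pow_succ', ContinuousLinearMap.mul_apply]; exact hinv _ ih
  have hK2 : ∀ n : ℕ, (A ^ n) f₂ ∈ Kᗮ := by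
    intro n
    induction n with
    | zero => simpa using hf₂K
    | succ n ih => rw [pow_succ', ContinuousLinearMap.mul_apply]; exact hinv' _ ih
  have hgrow : ∀ n : ℕ, ‖f₁‖ ≤ ‖(A ^ n) f₁‖ := by
    intro n
    induction n with
    | zero => simp
    | succ n ih =>
      rw [pow_succ', ContinuousLinearMap.mul_apply]
      exact ih.trans (hexp _ (hK1 n))
  have hshrink : ∀ n : ℕ, ‖(A ^ n) f₂‖ ≤ ‖f₂‖ := by
    intro n
    induction n with
    | zero => simp
    | succ n ih =>
      rw [pow_succ', ContinuousLinearMap.mul_apply]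
      exact (hcon _ (hK2 n)).trans ih
  have hsplit : ∀ n : ℕ, (A ^ n) f = (A ^ n) f₁ + (A ^ n) f₂ := by
    intro n
    rw [← map_add]
    congr 1
    rw [hf₂def]; abel
  have hlow : ∀ n : ℕ, ‖f₁‖ ≤ ‖(A ^ n) f‖ := by
    intro n
    refine (hgrow n).trans ?_
    have horth : (inner ℂ ((A ^ n) f₁) ((A ^ n) f₂) : ℂ) = 0 :=
      ((Submodule.mem_orthogonal K _).mp (hK2 n) _ (hK1 n))
    have h2 : ‖(A ^ n) f₁‖ ^ 2 ≤ ‖(A ^ n) f‖ ^ 2 := by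
      rw [hsplit n, sq, sq, norm_add_sq_eq_norm_sq_add_norm_sq_of_inner_eq_zero _ _ horth]
      nlinarith [norm_nonneg ((A ^ n) f₂), norm_nonneg ((A ^ n) f₁)]
    exact (pow_le_pow_iff_left₀ (norm_nonneg _) (norm_nonneg _) two_ne_zero).mp h2
  by_cases h : f₁ = 0
  · -- bounded orbit
    have hff : f = f₂ := by rw [hf₂def, h, sub_zero]
    have hbd : ∀ n : ℕ, ‖(A ^ n) f‖ ≤ ‖f₂‖ := fun n => by
      rw [hff]; exact hshrink n
    obtain ⟨z, hz⟩ := exists_ne (0 : H)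
    set y : H := ((2 * ‖f₂‖ + 2 : ℝ) / ‖z‖ : ℂ) • z with hy
    have hny : ‖y‖ = 2 * ‖f₂‖ + 2 := by
      have hz' : ‖z‖ ≠ 0 := norm_ne_zero_iff.mpr hz
      simp only [hy, norm_smul, norm_div, Complex.norm_real, Real.norm_eq_abs, abs_norm]
      rw [div_mul_cancel₀ _ hz', abs_of_pos (by positivity)]
    have hyc : y ∈ closure (Set.range fun n : ℕ => (A ^ n) f) := hf _
    obtain ⟨x, hx, hxd⟩ := Metric.mem_closure_iff.mp hyc 1 one_pos
    obtain ⟨n, rfl⟩ := hx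
    rw [dist_eq_norm] at hxd
    have h1 : ‖y‖ - ‖(A ^ n) f‖ ≤ ‖y - (A ^ n) f‖ := norm_sub_norm_le _ _
    have h2 := hbd n
    rw [hny] at h1
    linarith [norm_nonneg f₂]
  · have h0 : (0 : H) ∈ closure (Set.range fun n : ℕ => (A ^ n) f) := hf _
    obtain ⟨x, hx, hxd⟩ := Metric.mem_closure_iff.mp h0 ‖f₁‖ (norm_pos_iff.mpr h)
    obtain ⟨n, rfl⟩ := hx
    rw [dist_zero_left] at hxd
    exact absurd (hlow n) (not_le.mpr hxd)
end

section
/- Let H be a nontrivial complex Hilbert space, f ∈ H nonzero, and μ_f the spectral measure of a bounded normal operator A associated to f, so that ‖Aⁿ f‖² = ∫ |λ|^{2n} dμ_f(λ) where μ_f is a finite positive Borel measure on ℂ with total mass ‖f‖². Then the orbit {Aⁿ f : n ∈ ℕ} is not dense in H. -/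
/-!
Write `S = {λ : |λ| > 1}`. If `μ_f(S) = 0`, every moment `∫ |λ|^{2n} dμ_f` is at most the total
mass `‖f‖²`, so the orbit is bounded; a bounded set is never dense in a nontrivial normed space.
If `μ_f(S) > 0`, every moment is at least `μ_f(S)`, so the orbit stays outside a ball around `0`.
-/

open MeasureTheory Set

section NotDense

variable {E : Type*} [NormedAddCommGroup E]

theorem Bornology.IsBounded.not_dense (𝕜 : Type*) [NontriviallyNormedField 𝕜] [NormedSpace 𝕜 E]
    [Nontrivial E] {s : Set E} (hs : Bornology.IsBounded s) : ¬Dense s := fun hd =>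
  NormedSpace.unbounded_univ 𝕜 E (hd.closure_eq ▸ hs.closure)

theorem not_dense_of_forall_le_norm {s : Set E} {c : ℝ} (hc : 0 < c) (hs : ∀ x ∈ s, c ≤ ‖x‖) :
    ¬Dense s := fun hd => by
  obtain ⟨x, hxs, hx⟩ := hd.exists_mem_open Metric.isOpen_ball ⟨0, Metric.mem_ball_self hc⟩
  exact (mem_ball_zero_iff.1 hx).not_ge (hs x hxs)

end NotDense

section Moments

variable {E : Type*} [NormedAddCommGroup E] [MeasurableSpace E] {μ : Measure E}

theorem lintegral_ofReal_norm_pow_le_measure_univ (h : ∀ᵐ x ∂μ, ‖x‖ ≤ 1) (k : ℕ) :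
    ∫⁻ x, ENNReal.ofReal (‖x‖ ^ k) ∂μ ≤ μ univ :=
  calc ∫⁻ x, ENNReal.ofReal (‖x‖ ^ k) ∂μ ≤ ∫⁻ _, 1 ∂μ := by
        refine lintegral_mono_ae (h.mono fun x hx => ?_)
        exact ENNReal.ofReal_le_one.2 (pow_le_one₀ (norm_nonneg x) hx)
    _ = μ univ := lintegral_one

theorem measure_one_lt_norm_le_lintegral_ofReal_norm_pow [OpensMeasurableSpace E] (k : ℕ) :
    μ {x | 1 < ‖x‖} ≤ ∫⁻ x, ENNReal.ofReal (‖x‖ ^ k) ∂μ := by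
  have hS : MeasurableSet {x : E | 1 < ‖x‖} := measurableSet_lt measurable_const measurable_norm
  rw [← lintegral_indicator_one hS]
  exact lintegral_mono (indicator_le fun x hx => ENNReal.one_le_ofReal.2 (one_le_pow₀ hx.le))

end Moments

theorem stmt_15_general {H : Type*} [NormedAddCommGroup H] [InnerProductSpace ℂ H]
    [Nontrivial H]
    (A : H →L[ℂ] H) (f : H)
    (μ : Measure ℂ) [IsFiniteMeasure μ]
    (hmass : μ Set.univ = ENNReal.ofReal (‖f‖ ^ 2))
    (hmom : ∀ n : ℕ, ENNReal.ofReal (‖(A ^ n) f‖ ^ 2) =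
      ∫⁻ l : ℂ, ENNReal.ofReal (‖l‖ ^ (2 * n)) ∂μ) :
    ¬ Dense (Set.range fun n : ℕ => (A ^ n) f) := by
  rcases eq_or_ne (μ {l | 1 < ‖l‖}) 0 with hS | hS
  · have hnorm_le_one : ∀ᵐ l ∂μ, ‖l‖ ≤ 1 := by simpa [ae_iff] using hS
    refine Bornology.IsBounded.not_dense ℂ (isBounded_iff_forall_norm_le.2 ⟨‖f‖, ?_⟩)
    rintro _ ⟨n, rfl⟩
    have hsq : ENNReal.ofReal (‖(A ^ n) f‖ ^ 2) ≤ ENNReal.ofReal (‖f‖ ^ 2) :=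
      hmom n ▸ hmass ▸ lintegral_ofReal_norm_pow_le_measure_univ hnorm_le_one (2 * n)
    exact (pow_le_pow_iff_left₀ (norm_nonneg _) (norm_nonneg _) two_ne_zero).1
      ((ENNReal.ofReal_le_ofReal_iff (by positivity)).1 hsq)
  · refine not_dense_of_forall_le_norm
      (Real.sqrt_pos.2 (ENNReal.toReal_pos hS (measure_ne_top μ _))) ?_
    rintro _ ⟨n, rfl⟩
    have hle := (measure_one_lt_norm_le_lintegral_ofReal_norm_pow (2 * n)).trans (hmom n).ge
    exact (Real.sqrt_le_left (norm_nonneg _)).2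
      (ENNReal.toReal_le_of_le_ofReal (by positivity) hle)

theorem stmt_15 {H : Type*} [NormedAddCommGroup H] [InnerProductSpace ℂ H]
    [CompleteSpace H] [Nontrivial H]
    (A : H →L[ℂ] H) (f : H) (hf : f ≠ 0)
    (μ : Measure ℂ) [IsFiniteMeasure μ]
    (hmass : μ Set.univ = ENNReal.ofReal (‖f‖ ^ 2))
    (hmom : ∀ n : ℕ, ENNReal.ofReal (‖(A ^ n) f‖ ^ 2) =
      ∫⁻ l : ℂ, ENNReal.ofReal (‖l‖ ^ (2 * n)) ∂μ) :
    ¬ Dense (Set.range fun n : ℕ => (A ^ n) f) :=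
  stmt_15_general A f μ hmass hmom
end
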